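/- arXiv:2210.02366 — 3 statements merged into one kernel-verified Lean document; each statement's English description precedes it below -/
import Mathlib

section
/- Suppose each tie set 𝓔_j has Lebesgue measure zero, j = 1,…,n. Then the optimal domains D_1*,…,D_n* minimize the loss: for every family of measurable sets D_1,…,D_n ⊆ Ω that forms an admissible partition, 𝓛(D_1*,…,D_n*) ≤ 𝓛(D_1,…,D_n). -/
/-! On the optimal domain `D_k*` the weighted density `q_k P_k` dominates every `q_j P_j`, and
the `D_k*` are disjoint and cover `Ω` up to the null tie sets. Splitting each `D_j` along the
`D_k*` therefore gives
`∑_j ∫_{D_j} q_j P_j ≤ ∑_k ∑_j ∫_{D_j ∩ D_k*} q_k P_k ≤ ∑_k ∫_{D_k*} q_k P_k`,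
the last step because the `D_j` overlap only where every `P_k` integrates to zero. As the loss
of a partition `D` is `∑_j q_j - ∑_j ∫_{D_j} q_j P_j`, the optimal domains have the least loss. -/

open MeasureTheory Function

theorem exists_strict_max_or_tie {ι β : Type*} [Finite ι] [Nonempty ι] [LinearOrder β]
    (a : ι → β) :
    (∃ j, ∀ k, k ≠ j → a k < a j) ∨ ∃ j, ∃ k, k ≠ j ∧ a k = a j ∧ ∀ i, a i ≤ a j := by
  obtain ⟨j, hj⟩ := Finite.exists_max a
  by_cases hstrict : ∀ k, k ≠ j → a k < a j
  · exact .inl ⟨j, hstrict⟩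
  · push Not at hstrict
    obtain ⟨k, hkj, hk⟩ := hstrict
    exact .inr ⟨j, k, hkj, le_antisymm (hj k) hk, hj⟩

section Integrals

variable {ι α : Type*} [MeasurableSpace α] {μ : Measure α} [Fintype ι] {f : α → ℝ}

theorem setIntegral_eq_sum_inter_of_ae_cover {s : Set α}
    {t : ι → Set α} (hs : MeasurableSet s) (ht : ∀ i, MeasurableSet (t i))
    (hdisj : Pairwise (Disjoint on t)) (hcover : μ (s \ ⋃ i, t i) = 0)
    (hf : IntegrableOn f s μ) :
    ∫ x in s, f x ∂μ = ∑ i, ∫ x in s ∩ t i, f x ∂μ := by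
  have hs_ae : (s ∩ ⋃ i, t i : Set α) =ᵐ[μ] s := by
    simpa only [Set.sdiff_sdiff_right_self] using sdiff_null_ae_eq_self (s := s) hcover
  rw [← setIntegral_congr_set hs_ae, Set.inter_iUnion,
    integral_iUnion (fun i => hs.inter (ht i))
      (hdisj.mono fun i j h => h.mono Set.inter_subset_right Set.inter_subset_right)
      (hf.mono_set (Set.iUnion_subset fun i => Set.inter_subset_left)),
    tsum_fintype]

theorem sum_setIntegral_inter_le (hf : Integrable f μ)
    (hf0 : 0 ≤ᵐ[μ] f) {s : ι → Set α} (hs : ∀ i, MeasurableSet (s i))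
    (hst : Pairwise fun i j => ∫ x in s i ∩ s j, f x ∂μ = 0) {A : Set α}
    (hA : MeasurableSet A) :
    ∑ i, ∫ x in s i ∩ A, f x ∂μ ≤ ∫ x in A, f x ∂μ := by
  -- The `s i` are pairwise a.e. disjoint for the measure with density `f`.
  set ν := μ.withDensity fun x => ENNReal.ofReal (f x)
  have hν : ∀ t, MeasurableSet t → ν t = ENNReal.ofReal (∫ x in t, f x ∂μ) := fun t ht => by
    rw [withDensity_apply _ ht,
      ofReal_integral_eq_lintegral_ofReal hf.integrableOn (ae_restrict_of_ae hf0)]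
  have hdisj : Pairwise (AEDisjoint ν on fun i => s i ∩ A) := fun i j hij =>
    AEDisjoint.mono (by rw [AEDisjoint, hν _ ((hs i).inter (hs j)), hst hij, ENNReal.ofReal_zero])
      Set.inter_subset_left Set.inter_subset_left
  have hnonneg : ∀ t, 0 ≤ ∫ x in t, f x ∂μ := fun t =>
    setIntegral_nonneg_of_ae_restrict (ae_restrict_of_ae hf0)
  rw [← ENNReal.ofReal_le_ofReal_iff (hnonneg A),
    ENNReal.ofReal_sum_of_nonneg fun i _ => hnonneg _]
  calc ∑ i, ENNReal.ofReal (∫ x in s i ∩ A, f x ∂μ) = ν (⋃ i, s i ∩ A) := by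
        rw [measure_iUnion₀ hdisj fun i => ((hs i).inter hA).nullMeasurableSet, tsum_fintype]
        exact Finset.sum_congr rfl fun i _ => (hν _ ((hs i).inter hA)).symm
    _ ≤ ν A := measure_mono (Set.iUnion_subset fun i => Set.inter_subset_right)
    _ = ENNReal.ofReal (∫ x in A, f x ∂μ) := hν A hA

end Integrals

section OptimalDomains

variable {ι α : Type*} (Ω : Set α) (g : ι → α → ℝ)

def optimalDomain (j : ι) : Set α :=
  {x | x ∈ Ω ∧ ∀ k, k ≠ j → g k x < g j x}

def tieSet (j : ι) : Set α :=
  ⋃ (k : ι) (_ : k ≠ j), {x | x ∈ Ω ∧ g k x = g j x ∧ ∀ i, g i x ≤ g j x}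

variable {Ω g}

theorem optimalDomain_subset (j : ι) : optimalDomain Ω g j ⊆ Ω := fun _ hx => hx.1

theorem le_of_mem_optimalDomain {j k : ι} {x : α} (hx : x ∈ optimalDomain Ω g k) :
    g j x ≤ g k x := by
  rcases eq_or_ne j k with rfl | hjk
  · exact le_rfl
  · exact (hx.2 j hjk).le

theorem pairwise_disjoint_optimalDomain : Pairwise (Disjoint on optimalDomain Ω g) :=
  fun _ k hjk => Set.disjoint_left.2 fun _ hj hk =>
    (hj.2 k hjk.symm).not_ge (le_of_mem_optimalDomain hk)

theorem measurableSet_optimalDomain [MeasurableSpace α] [Countable ι] (hΩ : MeasurableSet Ω)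
    (hg : ∀ j, Measurable (g j)) (j : ι) : MeasurableSet (optimalDomain Ω g j) := by
  simp only [optimalDomain, Set.ofPred_and, Set.ofPred_forall]
  exact hΩ.inter <| .iInter fun k => .iInter fun _ => measurableSet_lt (hg k) (hg j)

theorem diff_iUnion_optimalDomain_subset [Finite ι] [Nonempty ι] :
    Ω \ ⋃ j, optimalDomain Ω g j ⊆ ⋃ j, tieSet Ω g j := by
  rintro x ⟨hxΩ, hx⟩
  rcases exists_strict_max_or_tie (g · x) with ⟨j, hj⟩ | ⟨j, k, hkj, hk, hj⟩
  · exact (hx (Set.mem_iUnion.2 ⟨j, hxΩ, hj⟩)).elim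
  · exact Set.mem_iUnion.2 ⟨j, Set.mem_iUnion₂.2 ⟨k, hkj, hxΩ, hk, hj⟩⟩

theorem sum_setIntegral_le_sum_setIntegral_optimalDomain [Fintype ι] [Nonempty ι]
    [MeasurableSpace α] {μ : Measure α} (hΩ : MeasurableSet Ω) (hg_meas : ∀ j, Measurable (g j))
    (hg_int : ∀ j, Integrable (g j) μ) (hg_nonneg : ∀ j, 0 ≤ᵐ[μ] g j)
    (htie : ∀ j, μ (tieSet Ω g j) = 0) {D : ι → Set α} (hD : ∀ j, MeasurableSet (D j))
    (hDΩ : ∀ j, D j ⊆ Ω) (hDdisj : Pairwise fun j k => ∀ ℓ, ∫ x in D j ∩ D k, g ℓ x ∂μ = 0) :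
    ∑ j, ∫ x in D j, g j x ∂μ ≤ ∑ j, ∫ x in optimalDomain Ω g j, g j x ∂μ := by
  have hDstar := measurableSet_optimalDomain hΩ hg_meas
  have hcover : ∀ j, μ (D j \ ⋃ k, optimalDomain Ω g k) = 0 := fun j =>
    measure_mono_null
      ((Set.sdiff_subset_sdiff_left (hDΩ j)).trans diff_iUnion_optimalDomain_subset)
      (measure_iUnion_null htie)
  calc ∑ j, ∫ x in D j, g j x ∂μ
      = ∑ j, ∑ k, ∫ x in D j ∩ optimalDomain Ω g k, g j x ∂μ :=
        Finset.sum_congr rfl fun j _ => setIntegral_eq_sum_inter_of_ae_cover (hD j) hDstar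
          pairwise_disjoint_optimalDomain (hcover j) (hg_int j).integrableOn
    _ ≤ ∑ j, ∑ k, ∫ x in D j ∩ optimalDomain Ω g k, g k x ∂μ :=
        Finset.sum_le_sum fun j _ => Finset.sum_le_sum fun k _ =>
          setIntegral_mono_on (hg_int j).integrableOn (hg_int k).integrableOn
            ((hD j).inter (hDstar k)) fun _ hx => le_of_mem_optimalDomain hx.2
    _ = ∑ k, ∑ j, ∫ x in D j ∩ optimalDomain Ω g k, g k x ∂μ := Finset.sum_comm
    _ ≤ ∑ k, ∫ x in optimalDomain Ω g k, g k x ∂μ :=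
        Finset.sum_le_sum fun k _ => sum_setIntegral_inter_le (hg_int k) (hg_nonneg k) hD
          (fun i j hij => hDdisj hij k) (hDstar k)

end OptimalDomains

theorem mul_setIntegral_sdiff_eq_sub {α : Type*} [MeasurableSpace α] {μ : Measure α}
    {f : α → ℝ} {Ω A : Set α} (hA : MeasurableSet A) (hAΩ : A ⊆ Ω) (hf : IntegrableOn f Ω μ)
    (hf_one : ∫ x in Ω, f x ∂μ = 1) (c : ℝ) :
    c * ∫ x in Ω \ A, f x ∂μ = c - ∫ x in A, c * f x ∂μ := by
  rw [setIntegral_sdiff hA hf hAΩ, hf_one, integral_const_mul, mul_sub, mul_one]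

theorem optimal_domains_minimize_loss_general
    (n m : ℕ) (hn : 2 ≤ n)
    (Ω : Set (Fin m → ℝ)) (hΩ : MeasurableSet Ω)
    (P : Fin n → (Fin m → ℝ) → ℝ)
    (hPmeas : ∀ j, Measurable (P j))
    (hPnonneg : ∀ j r, 0 ≤ P j r)
    (hPsupp : ∀ j r, r ∉ Ω → P j r = 0)
    (hPone : ∀ j, ∫ r in Ω, P j r = 1)
    (q : Fin n → ℝ) (hq : ∀ j, 0 ≤ q j)
    (Dstar : Fin n → Set (Fin m → ℝ))
    (hDstar : ∀ j, Dstar j =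
      {r | r ∈ Ω ∧ ∀ k, k ≠ j → q k * P k r < q j * P j r})
    (E : Fin n → Set (Fin m → ℝ))
    (hE : ∀ j, E j = ⋃ (k : Fin n) (_ : k ≠ j),
      {r | r ∈ Ω ∧ q k * P k r = q j * P j r ∧ ∀ i, q i * P i r ≤ q j * P j r})
    (hEnull : ∀ j, volume (E j) = 0) :
    ∀ D : Fin n → Set (Fin m → ℝ),
      (∀ j, MeasurableSet (D j)) →
      (∀ j, D j ⊆ Ω) →
      (∀ ℓ, ∫ r in ⋃ k, D k, P ℓ r = 1) →
      (∀ j k, j ≠ k → ∀ ℓ, ∫ r in D j ∩ D k, P ℓ r = 0) →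
      ∑ j, q j * ∫ r in Ω \ Dstar j, P j r ≤
        ∑ j, q j * ∫ r in Ω \ D j, P j r := by
  intro D hD hDΩ _ hDdisj
  have : Nonempty (Fin n) := ⟨⟨0, by omega⟩⟩
  set g : Fin n → (Fin m → ℝ) → ℝ := fun j r => q j * P j r
  have hg_meas : ∀ j, Measurable (g j) := fun j => (hPmeas j).const_mul (q j)
  have hP_int : ∀ j, Integrable (P j) := fun j =>
    IntegrableOn.integrable_of_forall_notMem_eq_zero (integrable_of_integral_eq_one (hPone j))
      (hPsupp j)
  obtain rfl : Dstar = optimalDomain Ω g := funext hDstar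
  obtain rfl : E = tieSet Ω g := funext hE
  have hloss : ∀ A : Fin n → Set (Fin m → ℝ), (∀ j, MeasurableSet (A j)) → (∀ j, A j ⊆ Ω) →
      ∑ j, q j * ∫ r in Ω \ A j, P j r = ∑ j, q j - ∑ j, ∫ r in A j, g j r := fun A hA hAΩ => by
    rw [← Finset.sum_sub_distrib]
    exact Finset.sum_congr rfl fun j _ =>
      mul_setIntegral_sdiff_eq_sub (hA j) (hAΩ j) (hP_int j).integrableOn (hPone j) (q j)
  rw [hloss _ (measurableSet_optimalDomain hΩ hg_meas) optimalDomain_subset, hloss D hD hDΩ,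
    sub_le_sub_iff_left]
  refine sum_setIntegral_le_sum_setIntegral_optimalDomain hΩ hg_meas
    (fun j => (hP_int j).const_mul (q j))
    (fun j => ae_of_all _ fun r => mul_nonneg (hq j) (hPnonneg j r))
    hEnull hD hDΩ fun j k hjk ℓ => ?_
  rw [integral_const_mul, hDdisj j k hjk ℓ, mul_zero]

/-- If each tie set `𝓔_j` has Lebesgue measure zero, then the optimal
domains `D_j*` minimize the loss among all admissible partitions. -/
theorem optimal_domains_minimize_loss
    (n m : ℕ) (hn : 2 ≤ n) (hm : 1 ≤ m)
    (Ω : Set (Fin m → ℝ)) (hΩ : MeasurableSet Ω)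
    (P : Fin n → (Fin m → ℝ) → ℝ)
    (hPmeas : ∀ j, Measurable (P j))
    (hPnonneg : ∀ j r, 0 ≤ P j r)
    (hPsupp : ∀ j r, r ∉ Ω → P j r = 0)
    (hPone : ∀ j, ∫ r in Ω, P j r = 1)
    (q : Fin n → ℝ) (hq : ∀ j, 0 ≤ q j) (hqsum : ∑ j, q j = 1)
    (Dstar : Fin n → Set (Fin m → ℝ))
    (hDstar : ∀ j, Dstar j =
      {r | r ∈ Ω ∧ ∀ k, k ≠ j → q k * P k r < q j * P j r})
    (E : Fin n → Set (Fin m → ℝ))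
    (hE : ∀ j, E j = ⋃ (k : Fin n) (_ : k ≠ j),
      {r | r ∈ Ω ∧ q k * P k r = q j * P j r ∧ ∀ i, q i * P i r ≤ q j * P j r})
    (hEnull : ∀ j, volume (E j) = 0) :
    ∀ D : Fin n → Set (Fin m → ℝ),
      (∀ j, MeasurableSet (D j)) →
      (∀ j, D j ⊆ Ω) →
      (∀ ℓ, ∫ r in ⋃ k, D k, P ℓ r = 1) →
      (∀ j k, j ≠ k → ∀ ℓ, ∫ r in D j ∩ D k, P ℓ r = 0) →
      ∑ j, q j * ∫ r in Ω \ Dstar j, P j r ≤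
        ∑ j, q j * ∫ r in Ω \ D j, P j r :=
  optimal_domains_minimize_loss_general n m hn Ω hΩ P hPmeas hPnonneg hPsupp hPone q hq Dstar hDstar
    E hE hEnull
end

section
/- Let D̂_1,…,D̂_n be measurable sets that partition Ω exactly (pairwise disjoint with union Ω) and satisfy D̂_j ⊆ {r ∈ Ω : q_j P_j(r) ≥ q_k P_k(r) for all k} for every j (i.e., every point is assigned to a class of maximal weighted density). Then 𝓛(D̂_1,…,D̂_n) ≤ 𝓛(D_1,…,D_n) for every family of measurable sets D_1,…,D_n ⊆ Ω forming an admissible partition. In particular, even when the tie sets 𝓔_j have positive measure, any assignment of tie points to classes achieving the maximum yields minimal loss. -/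
/-!
Put `g j = q j * P j` and `f = ⨆ j, g j`. The loss of `D` is `∑ j, q j * ∫ r in Ω, P j r` minus
the captured mass `∑ j, ∫ r in D j, g j r`, so it suffices to compare captured masses. For
`Dhat` the captured mass is exactly `∫ r in Ω, f r`, since `g j = f` on `Dhat j` and the `Dhat j`
tile `Ω`. For an admissible `D` it is at most `∫ r in Ω, f r`: off the overlaps, which carry no
mass, every point lies in at most one `D j`, so `∑ j, (D j).indicator (g j) ≤ f` a.e.
-/

open MeasureTheory Set Function

section

variable {ι α : Type*} [Fintype ι] {g : ι → α → ℝ}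

lemma sum_indicator_le_iSup {s : ι → Set α} {x : α} (hg : ∀ i, 0 ≤ g i x)
    (hs : ∀ i j, i ≠ j → x ∈ s i → x ∈ s j → ∀ k, g k x = 0) :
    ∑ i, (s i).indicator (g i) x ≤ ⨆ i, g i x := by
  by_cases hx : ∃ i, x ∈ s i
  · obtain ⟨i, hi⟩ := hx
    rw [Finset.sum_eq_single i
      (fun j _ hji => indicator_apply_eq_zero.2 fun hj => hs j i hji hj hi j)
      (absurd (Finset.mem_univ i)), indicator_of_mem hi]
    exact le_ciSup (f := fun k => g k x) (Finite.bddAbove_range _) i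
  · simp only [not_exists] at hx
    simpa [indicator_of_notMem (hx _)] using Real.iSup_nonneg hg

variable [MeasurableSpace α] {μ : Measure α}

lemma integrable_iSup_of_nonneg (hg : ∀ i x, 0 ≤ g i x) (hgi : ∀ i, Integrable (g i) μ) :
    Integrable (fun x => ⨆ i, g i x) μ := by
  refine (integrable_finsetSum Finset.univ fun i _ => hgi i).mono'
    (AEMeasurable.iSup fun i => (hgi i).aemeasurable).aestronglyMeasurable
    (ae_of_all _ fun x => ?_)
  rw [Real.norm_of_nonneg (Real.iSup_nonneg fun i => hg i x)]
  exact Real.iSup_le (fun i => Finset.single_le_sum (fun k _ => hg k x) (Finset.mem_univ i))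
    (Finset.sum_nonneg fun k _ => hg k x)

variable {Ω : Set α}

lemma sum_setIntegral_eq_integral_iSup {s : ι → Set α} (hg : ∀ i x, 0 ≤ g i x)
    (hgi : ∀ i, IntegrableOn (g i) Ω μ) (hs : ∀ i, MeasurableSet (s i))
    (hdisj : Pairwise (Disjoint on s)) (hunion : ⋃ i, s i = Ω)
    (hmax : ∀ i, ∀ x ∈ s i, ∀ k, g k x ≤ g i x) :
    ∑ i, ∫ x in s i, g i x ∂μ = ∫ x in Ω, ⨆ i, g i x ∂μ := by
  have hf : IntegrableOn (fun x => ⨆ i, g i x) Ω μ := integrable_iSup_of_nonneg hg hgi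
  have hg_eq : ∀ i, ∫ x in s i, g i x ∂μ = ∫ x in s i, ⨆ k, g k x ∂μ := fun i =>
    setIntegral_congr_fun (hs i) fun x hx =>
      have : Nonempty ι := ⟨i⟩
      le_antisymm (le_ciSup (f := fun k => g k x) (Finite.bddAbove_range _) i)
        (ciSup_le (hmax i x hx))
  simp_rw [hg_eq, ← hunion]
  exact (integral_iUnion_fintype hs hdisj fun i =>
    hf.mono_set (hunion ▸ subset_iUnion s i)).symm

lemma ae_sum_indicator_le_iSup {s : ι → Set α} (hg : ∀ i x, 0 ≤ g i x)
    (hgi : ∀ i, IntegrableOn (g i) Ω μ) (hs : ∀ i, MeasurableSet (s i)) (hsΩ : ∀ i, s i ⊆ Ω)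
    (hoverlap : ∀ i j, i ≠ j → ∀ k, ∫ x in s i ∩ s j, g k x ∂μ = 0) :
    ∀ᵐ x ∂μ, ∑ i, (s i).indicator (g i) x ≤ ⨆ i, g i x := by
  have hvanish : ∀ i j k, ∀ᵐ x ∂μ, i ≠ j → x ∈ s i → x ∈ s j → g k x = 0 := by
    intro i j k
    by_cases hij : i = j
    · exact ae_of_all _ fun _ h => absurd hij h
    have hint : IntegrableOn (g k) (s i ∩ s j) μ :=
      (hgi k).mono_set (inter_subset_left.trans (hsΩ i))
    have := (setIntegral_eq_zero_iff_of_nonneg_ae (ae_of_all _ (hg k)) hint).1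
      (hoverlap i j hij k)
    filter_upwards [(ae_restrict_iff' ((hs i).inter (hs j))).1 this] with x hx _ hxi hxj
      using hx ⟨hxi, hxj⟩
  filter_upwards [ae_all_iff.2 fun i => ae_all_iff.2 fun j => ae_all_iff.2 (hvanish i j)]
    with x hx
  exact sum_indicator_le_iSup (fun i => hg i x) fun i j hij hi hj k => hx i j k hij hi hj

lemma sum_setIntegral_le_integral_iSup {s : ι → Set α} (hg : ∀ i x, 0 ≤ g i x)
    (hgi : ∀ i, IntegrableOn (g i) Ω μ) (hs : ∀ i, MeasurableSet (s i)) (hsΩ : ∀ i, s i ⊆ Ω)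
    (hoverlap : ∀ i j, i ≠ j → ∀ k, ∫ x in s i ∩ s j, g k x ∂μ = 0) :
    ∑ i, ∫ x in s i, g i x ∂μ ≤ ∫ x in Ω, ⨆ i, g i x ∂μ := by
  calc ∑ i, ∫ x in s i, g i x ∂μ = ∑ i, ∫ x in Ω, (s i).indicator (g i) x ∂μ := by
        simp_rw [setIntegral_indicator (hs _), inter_eq_right.2 (hsΩ _)]
    _ = ∫ x in Ω, ∑ i, (s i).indicator (g i) x ∂μ :=
        (integral_finsetSum _ fun i _ => (hgi i).indicator (hs i)).symm
    _ ≤ ∫ x in Ω, ⨆ i, g i x ∂μ :=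
        integral_mono_ae (integrable_finsetSum _ fun i _ => (hgi i).indicator (hs i))
          (integrable_iSup_of_nonneg hg hgi)
          (ae_restrict_of_ae (ae_sum_indicator_le_iSup hg hgi hs hsΩ hoverlap))

lemma sum_mul_setIntegral_sdiff {P : ι → α → ℝ} (q : ι → ℝ) {s : ι → Set α}
    (hP : ∀ i, IntegrableOn (P i) Ω μ) (hs : ∀ i, MeasurableSet (s i)) (hsΩ : ∀ i, s i ⊆ Ω) :
    ∑ i, q i * ∫ x in Ω \ s i, P i x ∂μ =
      ∑ i, q i * ∫ x in Ω, P i x ∂μ - ∑ i, ∫ x in s i, q i * P i x ∂μ := by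
  simp_rw [setIntegral_sdiff (hs _) (hP _) (hsΩ _), integral_const_mul, mul_sub,
    Finset.sum_sub_distrib]

end

theorem max_density_partition_minimizes_loss_general
    (n m : ℕ)
    (Ω : Set (Fin m → ℝ))
    (P : Fin n → (Fin m → ℝ) → ℝ)
    (hPnonneg : ∀ j r, 0 ≤ P j r)
    (hPone : ∀ j, ∫ r in Ω, P j r = 1)
    (q : Fin n → ℝ) (hq : ∀ j, 0 ≤ q j)
    (Dhat : Fin n → Set (Fin m → ℝ))
    (hDhatMeas : ∀ j, MeasurableSet (Dhat j))
    (hDhatDisj : ∀ j k, j ≠ k → Dhat j ∩ Dhat k = ∅)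
    (hDhatUnion : ⋃ j, Dhat j = Ω)
    (hDhatMax : ∀ j, Dhat j ⊆ {r | r ∈ Ω ∧ ∀ k, q k * P k r ≤ q j * P j r}) :
    ∀ D : Fin n → Set (Fin m → ℝ),
      (∀ j, MeasurableSet (D j)) →
      (∀ j, D j ⊆ Ω) →
      (∀ ℓ, ∫ r in ⋃ k, D k, P ℓ r = 1) →
      (∀ j k, j ≠ k → ∀ ℓ, ∫ r in D j ∩ D k, P ℓ r = 0) →
      ∑ j, q j * ∫ r in Ω \ Dhat j, P j r ≤
        ∑ j, q j * ∫ r in Ω \ D j, P j r := by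
  intro D hDmeas hDsub _ hDoverlap
  have hPint : ∀ j, IntegrableOn (P j) Ω :=
    fun j => Integrable.of_integral_ne_zero (by simp [hPone j])
  have hgnonneg : ∀ j r, 0 ≤ q j * P j r := fun j r => mul_nonneg (hq j) (hPnonneg j r)
  have hgint : ∀ j, IntegrableOn (fun r => q j * P j r) Ω := fun j => (hPint j).const_mul (q j)
  rw [sum_mul_setIntegral_sdiff q hPint hDhatMeas fun j => hDhatUnion ▸ subset_iUnion Dhat j,
    sum_mul_setIntegral_sdiff q hPint hDmeas hDsub]
  refine sub_le_sub_left ?_ _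
  calc ∑ j, ∫ r in D j, q j * P j r
      ≤ ∫ r in Ω, ⨆ j, q j * P j r :=
        sum_setIntegral_le_integral_iSup hgnonneg hgint hDmeas hDsub fun j k hjk ℓ => by
          rw [integral_const_mul, hDoverlap j k hjk ℓ, mul_zero]
    _ = ∑ j, ∫ r in Dhat j, q j * P j r :=
        (sum_setIntegral_eq_integral_iSup hgnonneg hgint hDhatMeas
          (fun j k hjk => disjoint_iff_inter_eq_empty.2 (hDhatDisj j k hjk)) hDhatUnion
          fun j r hr => (hDhatMax j hr).2).symm

/-- Any exact partition assigning each point to a class of maximal weighted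
density minimizes the loss among all admissible partitions (even when tie sets have
positive measure). -/
theorem max_density_partition_minimizes_loss
    (n m : ℕ) (hn : 2 ≤ n) (hm : 1 ≤ m)
    (Ω : Set (Fin m → ℝ)) (hΩ : MeasurableSet Ω)
    (P : Fin n → (Fin m → ℝ) → ℝ)
    (hPmeas : ∀ j, Measurable (P j))
    (hPnonneg : ∀ j r, 0 ≤ P j r)
    (hPsupp : ∀ j r, r ∉ Ω → P j r = 0)
    (hPone : ∀ j, ∫ r in Ω, P j r = 1)
    (q : Fin n → ℝ) (hq : ∀ j, 0 ≤ q j) (hqsum : ∑ j, q j = 1)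
    (Dhat : Fin n → Set (Fin m → ℝ))
    (hDhatMeas : ∀ j, MeasurableSet (Dhat j))
    (hDhatDisj : ∀ j k, j ≠ k → Dhat j ∩ Dhat k = ∅)
    (hDhatUnion : ⋃ j, Dhat j = Ω)
    (hDhatMax : ∀ j, Dhat j ⊆ {r | r ∈ Ω ∧ ∀ k, q k * P k r ≤ q j * P j r}) :
    ∀ D : Fin n → Set (Fin m → ℝ),
      (∀ j, MeasurableSet (D j)) →
      (∀ j, D j ⊆ Ω) →
      (∀ ℓ, ∫ r in ⋃ k, D k, P ℓ r = 1) →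
      (∀ j k, j ≠ k → ∀ ℓ, ∫ r in D j ∩ D k, P ℓ r = 0) →
      ∑ j, q j * ∫ r in Ω \ Dhat j, P j r ≤
        ∑ j, q j * ∫ r in Ω \ D j, P j r :=
  max_density_partition_minimizes_loss_general n m Ω P hPnonneg hPone q hq Dhat hDhatMeas hDhatDisj
    hDhatUnion hDhatMax
end

section
/- The generalized prevalence estimates converge to the true values in mean square: if the matrix P − P_n is invertible and q̂ = (P − P_n)^{−1}(Q̂̄ − P̄_n) with Q̂̄ = (Q̂_1,…,Q̂_{n−1}), then E[‖q̂ − q̄‖₂²] ≤ ‖(P − P_n)^{−1}‖_op² · (Σ_{j=1}^{n−1} Q_j(1 − Q_j))/S, where ‖·‖_op is the operator norm; in particular E[‖q̂ − q̄‖₂²] ≤ ‖(P − P_n)^{−1}‖_op² (n−1)/(4S) → 0 as S → ∞. -/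
open MeasureTheory ProbabilityTheory Matrix

/-!
Since `∑ q_k = 1`, the mixture identity `Q_j = ∑_k q_k P_{j,k}` reads `(P - P_n) q̄ = Q̄ - P̄_n`,
so `q̂ - q̄ = (P - P_n)⁻¹ (Q̂̄ - Q̄)` and `‖q̂ - q̄‖² ≤ ‖(P - P_n)⁻¹‖² ‖Q̂̄ - Q̄‖²`.
Each `Q̂_j` is the empirical frequency of the event `R ∈ D_j`, of probability `Q_j`, among `S`
independent draws; its mean square error is its variance `Q_j (1 - Q_j) / S ≤ 1 / (4 S)`.
-/

theorem Matrix.sum_sq_mulVec_le {ι : Type*} [Fintype ι] [DecidableEq ι]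
    (B : Matrix ι ι ℝ) (v : ι → ℝ) :
    ∑ k, (B *ᵥ v) k ^ 2 ≤ ‖toEuclideanCLM (𝕜 := ℝ) B‖ ^ 2 * ∑ j, v j ^ 2 := by
  have h := (toEuclideanCLM (𝕜 := ℝ) B).le_opNorm (WithLp.toLp 2 v)
  rw [toEuclideanCLM_toLp] at h
  have := pow_le_pow_left₀ (norm_nonneg _) h 2
  simpa [mul_pow, EuclideanSpace.norm_sq_eq] using this

theorem Fin.sum_univ_eq_sum_init_add_last {M : Type*} [AddCommMonoid M] {n : ℕ}
    (e : Fin (n - 1) → Fin n) (he : ∀ i, (e i : ℕ) = i)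
    (last : Fin n) (hlast : (last : ℕ) = n - 1) (f : Fin n → M) :
    ∑ k, f k = ∑ i, f (e i) + f last := by
  obtain ⟨n, rfl⟩ : ∃ k, n = k + 1 := Nat.exists_eq_succ_of_ne_zero last.pos.ne'
  have he' : e = Fin.castSucc := funext fun i => Fin.ext (he i)
  have hlast' : last = Fin.last n := Fin.ext hlast
  subst he' hlast'
  exact Fin.sum_univ_castSucc f

theorem Matrix.mulVec_comp_eq_sub_last {R : Type*} [CommRing R] {n : ℕ}
    (e : Fin (n - 1) → Fin n) (he : ∀ i, (e i : ℕ) = i)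
    (last : Fin n) (hlast : (last : ℕ) = n - 1)
    (M : Matrix (Fin n) (Fin n) R) (A : Matrix (Fin (n - 1)) (Fin (n - 1)) R)
    (hA : ∀ i j, A i j = M (e i) (e j) - M (e i) last)
    (w : Fin n → R) (hw : ∑ k, w k = 1) :
    A *ᵥ (w ∘ e) = fun i => (M *ᵥ w) (e i) - M (e i) last := by
  ext i
  have hsplit : ∀ f : Fin n → R, ∑ k, f k = ∑ i, f (e i) + f last :=
    Fin.sum_univ_eq_sum_init_add_last e he last hlast
  have hwlast : w last = 1 - ∑ j, w (e j) := by rw [← hw, hsplit w]; ring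
  simp only [mulVec, dotProduct, hA, Function.comp_apply]
  rw [hsplit fun k => M (e i) k * w k, hwlast, mul_sub, Finset.mul_sum]
  simp only [sub_mul, Finset.sum_sub_distrib]
  ring

theorem Matrix.nonsing_inv_mulVec_sub_of_mulVec_eq {ι R : Type*} [Fintype ι] [DecidableEq ι]
    [CommRing R] {A : Matrix ι ι R} (hA : IsUnit A) {x y b : ι → R} (hx : A *ᵥ x = y - b)
    (u : ι → R) : A⁻¹ *ᵥ (u - b) - x = A⁻¹ *ᵥ (u - y) := by
  have hAA : A⁻¹ * A = 1 := nonsing_inv_mul A ((isUnit_iff_isUnit_det A).mp hA)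
  rw [← one_mulVec x, ← hAA, ← mulVec_mulVec, hx, ← mulVec_sub, sub_sub_sub_cancel_right]

theorem sum_mul_one_sub_le_card_div_four {ι : Type*} [Fintype ι] (x : ι → ℝ) :
    ∑ i, x i * (1 - x i) ≤ Fintype.card ι / 4 := by
  calc ∑ i, x i * (1 - x i) ≤ ∑ _i : ι, (1 / 4 : ℝ) :=
        Finset.sum_le_sum fun i _ => by nlinarith [sq_nonneg (x i - 1 / 2)]
    _ = Fintype.card ι / 4 := by rw [Finset.sum_const, Finset.card_univ, nsmul_eq_mul]; ring

theorem measureReal_withDensity_ofReal {α : Type*} [MeasurableSpace α] {μ : Measure α}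
    {f : α → ℝ} {s : Set α} (hs : MeasurableSet s) (hf : IntegrableOn f s μ)
    (hf0 : ∀ᵐ x ∂μ.restrict s, 0 ≤ f x) :
    (μ.withDensity fun x => ENNReal.ofReal (f x)).real s = ∫ x in s, f x ∂μ := by
  rw [measureReal_def, withDensity_apply _ hs, ← ofReal_integral_eq_lintegral_ofReal hf hf0,
    ENNReal.toReal_ofReal (integral_nonneg_of_ae hf0)]

theorem variance_indicator_one {Ω : Type*} [MeasurableSpace Ω] {μ : Measure Ω}
    [IsProbabilityMeasure μ] {s : Set Ω} (hs : MeasurableSet s) :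
    Var[s.indicator fun _ => (1 : ℝ); μ] = μ.real s * (1 - μ.real s) := by
  have hsq : (s.indicator fun _ => (1 : ℝ)) ^ 2 = s.indicator fun _ => 1 := by
    ext ω; by_cases h : ω ∈ s <;> simp [h]
  rw [variance_eq_sub (memLp_indicator_const 2 hs 1 (Or.inr (measure_ne_top μ s))), hsq,
    integral_indicator_const (1 : ℝ) hs, smul_eq_mul, mul_one]
  ring

section EmpiricalFrequency

variable {ι Ω α : Type*} [Fintype ι] {R : ι → Ω → α} {B : Set α}

noncomputable def empiricalFrequency (R : ι → Ω → α) (B : Set α) (ω : Ω) : ℝ :=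
  (∑ i, B.indicator (fun _ => (1 : ℝ)) (R i ω)) / Fintype.card ι

theorem empiricalFrequency_eq_const_mul_sum :
    empiricalFrequency R B =
      fun ω => (Fintype.card ι : ℝ)⁻¹ * ∑ i, (R i ⁻¹' B).indicator (fun _ => (1 : ℝ)) ω := by
  ext ω
  simp only [empiricalFrequency, div_eq_inv_mul]
  rfl

variable [MeasurableSpace Ω] [MeasurableSpace α] {μ : Measure Ω}

theorem memLp_empiricalFrequency [IsFiniteMeasure μ] (hR : ∀ i, Measurable (R i))
    (hB : MeasurableSet B) (p : ENNReal) : MemLp (empiricalFrequency R B) p μ := by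
  have hX : ∀ i, MemLp ((R i ⁻¹' B).indicator fun _ => (1 : ℝ)) p μ := fun i =>
    memLp_indicator_const p (hR i hB) (1 : ℝ) (Or.inr (measure_ne_top μ _))
  rw [empiricalFrequency_eq_const_mul_sum]
  exact (memLp_finsetSum Finset.univ fun i _ => hX i).const_mul _

theorem integral_empiricalFrequency_sub_sq [IsProbabilityMeasure μ] [Nonempty ι]
    (hR : ∀ i, Measurable (R i)) (hindep : Pairwise fun i j => IndepFun (R i) (R j) μ)
    (hB : MeasurableSet B) {p : ℝ} (hp : ∀ i, μ.real (R i ⁻¹' B) = p) :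
    ∫ ω, (empiricalFrequency R B ω - p) ^ 2 ∂μ = p * (1 - p) / Fintype.card ι := by
  set X : ι → Ω → ℝ := fun i => (R i ⁻¹' B).indicator fun _ => 1
  have hX : ∀ i, MemLp (X i) 2 μ := fun i =>
    memLp_indicator_const 2 (hR i hB) 1 (Or.inr (measure_ne_top μ _))
  have hN : (Fintype.card ι : ℝ) ≠ 0 := Nat.cast_ne_zero.mpr Fintype.card_ne_zero
  have hmean : μ[empiricalFrequency R B] = p := by
    rw [empiricalFrequency_eq_const_mul_sum, integral_const_mul, integral_finsetSum _
      fun i _ => (hX i).integrable one_le_two]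
    simp only [X, integral_indicator_const (1 : ℝ) (hR _ hB), hp, smul_eq_mul, mul_one,
      Finset.sum_const, Finset.card_univ, nsmul_eq_mul]
    field_simp
  have hvar_sum : Var[∑ i, X i; μ] = Fintype.card ι * (p * (1 - p)) := by
    rw [IndepFun.variance_sum (fun i _ => hX i)
      fun i _ j _ hij => (hindep hij).comp (measurable_const.indicator hB)
        (measurable_const.indicator hB)]
    simp only [X, variance_indicator_one (hR _ hB), hp, Finset.sum_const, Finset.card_univ,
      nsmul_eq_mul]
  calc ∫ ω, (empiricalFrequency R B ω - p) ^ 2 ∂μ = Var[empiricalFrequency R B; μ] := by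
        rw [variance_eq_integral (memLp_empiricalFrequency hR hB 2).aemeasurable, hmean]
    _ = (Fintype.card ι : ℝ)⁻¹ ^ 2 * Var[∑ i, X i; μ] := by
        rw [empiricalFrequency_eq_const_mul_sum, variance_const_mul, Finset.sum_fn]
    _ = p * (1 - p) / Fintype.card ι := by
        rw [hvar_sum]; field_simp

end EmpiricalFrequency

theorem integral_sum_sq_mulVec_le {ι Ω : Type*} [Fintype ι] [DecidableEq ι]
    [MeasurableSpace Ω] {μ : Measure Ω} (B : Matrix ι ι ℝ) {Y : Ω → ι → ℝ}
    (hY : ∀ j, Integrable (fun ω => Y ω j ^ 2) μ) :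
    ∫ ω, ∑ k, (B *ᵥ Y ω) k ^ 2 ∂μ ≤
      ‖toEuclideanCLM (𝕜 := ℝ) B‖ ^ 2 * ∑ j, ∫ ω, Y ω j ^ 2 ∂μ := by
  rw [← integral_finsetSum _ fun j _ => hY j, ← integral_const_mul]
  exact integral_mono_of_nonneg (ae_of_all _ fun ω => by positivity)
    ((integrable_finsetSum _ fun j _ => hY j).const_mul _)
    (ae_of_all _ fun ω => B.sum_sq_mulVec_le (Y ω))

theorem prevalence_estimates_mean_square_convergence_general
    (n m : ℕ)
    (Ω : Set (Fin m → ℝ))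
    (P : Fin n → (Fin m → ℝ) → ℝ)
    (hPnonneg : ∀ j r, 0 ≤ P j r)
    (hPone : ∀ j, ∫ r in Ω, P j r = 1)
    (q : Fin n → ℝ) (hq : ∀ j, 0 ≤ q j) (hqsum : ∑ j, q j = 1)
    (D : Fin n → Set (Fin m → ℝ))
    (hDmeas : ∀ j, MeasurableSet (D j))
    (hDunion : ⋃ j, D j = Ω)
    (Qd : Fin n → ℝ)
    (hQd : ∀ j, Qd j = ∫ r in D j, (∑ k, q k * P k r))
    (Pmat : Fin n → Fin n → ℝ)
    (hPmat : ∀ j k, Pmat j k = ∫ r in D j, P k r)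
    (e : Fin (n - 1) → Fin n) (he : ∀ i, (e i : ℕ) = (i : ℕ))
    (lastIdx : Fin n) (hlast : (lastIdx : ℕ) = n - 1)
    (A : Matrix (Fin (n - 1)) (Fin (n - 1)) ℝ)
    (hA : ∀ i j, A i j = Pmat (e i) (e j) - Pmat (e i) lastIdx)
    (hAinv : IsUnit A)
    (Ω₀ : Type) [MeasurableSpace Ω₀] (μ : Measure Ω₀) [IsProbabilityMeasure μ]
    (S : ℕ) (hS : 0 < S)
    (R : Fin S → Ω₀ → (Fin m → ℝ))
    (hRmeas : ∀ i, Measurable (R i))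
    (hRlaw : ∀ i, Measure.map (R i) μ =
      volume.withDensity (fun r => ENNReal.ofReal (∑ j, q j * P j r)))
    (hRindep : iIndepFun R μ)
    (Qhat : Fin n → Ω₀ → ℝ)
    (hQhat : ∀ j ω, Qhat j ω =
      (∑ i, (D j).indicator (fun _ => (1 : ℝ)) (R i ω)) / S)
    (qhat : Ω₀ → Fin (n - 1) → ℝ)
    (hqhat : ∀ ω, qhat ω =
      A⁻¹.mulVec (fun i => Qhat (e i) ω - Pmat (e i) lastIdx)) :
    (∫ ω, (∑ k : Fin (n - 1), (qhat ω k - q (e k)) ^ 2) ∂μ ≤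
        ‖Matrix.toEuclideanCLM (𝕜 := ℝ) A⁻¹‖ ^ 2 *
          ((∑ j : Fin (n - 1), Qd (e j) * (1 - Qd (e j))) / S)) ∧
      ∫ ω, (∑ k : Fin (n - 1), (qhat ω k - q (e k)) ^ 2) ∂μ ≤
        ‖Matrix.toEuclideanCLM (𝕜 := ℝ) A⁻¹‖ ^ 2 * ((n - 1) / (4 * S)) := by
  have hPint : ∀ j k, IntegrableOn (P k) (D j) := fun j k =>
    IntegrableOn.mono_set (Integrable.of_integral_ne_zero (by rw [hPone k]; exact one_ne_zero))
      (hDunion ▸ Set.subset_iUnion D j)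
  have hfreq : ∀ j i, μ.real (R i ⁻¹' D j) = Qd j := fun j i => by
    rw [← map_measureReal_apply (hRmeas i) (hDmeas j), hRlaw i, hQd,
      measureReal_withDensity_ofReal (hDmeas j)
        (integrable_finsetSum _ fun k _ => (hPint j k).const_mul (q k))
        (ae_of_all _ fun r => Finset.sum_nonneg fun k _ => mul_nonneg (hq k) (hPnonneg k r))]
  have : Nonempty (Fin S) := Fin.pos_iff_nonempty.mp hS
  have hQhat_eq : ∀ j, Qhat j = empiricalFrequency R (D j) := fun j => by
    ext ω; rw [hQhat, empiricalFrequency, Fintype.card_fin]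
  have hvar : ∀ j, ∫ ω, (Qhat j ω - Qd j) ^ 2 ∂μ = Qd j * (1 - Qd j) / S := fun j => by
    rw [hQhat_eq, integral_empiricalFrequency_sub_sq hRmeas (fun i i' h => hRindep.indepFun h)
      (hDmeas j) (hfreq j), Fintype.card_fin]
  have hsq_int : ∀ j, Integrable (fun ω => (Qhat j ω - Qd j) ^ 2) μ := fun j => by
    rw [hQhat_eq]
    exact ((memLp_empiricalFrequency hRmeas (hDmeas j) 2).sub (memLp_const _)).integrable_sq
  have hmix : ∀ j, Qd j = (Pmat *ᵥ q) j := fun j => by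
    rw [hQd, integral_finsetSum _ fun k _ => (hPint j k).const_mul (q k)]
    exact Finset.sum_congr rfl fun k _ => by rw [integral_const_mul, ← hPmat, mul_comm]
  have hqbar : A *ᵥ (q ∘ e) = fun i => Qd (e i) - Pmat (e i) lastIdx := by
    simp only [hmix]
    exact mulVec_comp_eq_sub_last e he lastIdx hlast Pmat A hA q hqsum
  have herr : ∀ ω, (fun k => qhat ω k - q (e k)) = A⁻¹ *ᵥ fun j => Qhat (e j) ω - Qd (e j) :=
    fun ω => by rw [hqhat]; exact nonsing_inv_mulVec_sub_of_mulVec_eq hAinv hqbar _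
  have hfirst := calc
    ∫ ω, ∑ k, (qhat ω k - q (e k)) ^ 2 ∂μ
        = ∫ ω, ∑ k, (A⁻¹ *ᵥ fun j => Qhat (e j) ω - Qd (e j)) k ^ 2 ∂μ := by
          simp only [← herr]
    _ ≤ ‖toEuclideanCLM (𝕜 := ℝ) A⁻¹‖ ^ 2 * ∑ j, ∫ ω, (Qhat (e j) ω - Qd (e j)) ^ 2 ∂μ :=
          integral_sum_sq_mulVec_le A⁻¹ fun j => hsq_int (e j)
    _ = ‖toEuclideanCLM (𝕜 := ℝ) A⁻¹‖ ^ 2 * ((∑ j, Qd (e j) * (1 - Qd (e j))) / S) := by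
          simp only [hvar, Finset.sum_div]
  refine ⟨hfirst, hfirst.trans ?_⟩
  have hquarter := sum_mul_one_sub_le_card_div_four fun j => Qd (e j)
  rw [Fintype.card_fin, Nat.cast_pred lastIdx.pos] at hquarter
  rw [← div_div]
  gcongr

/-- Mean-square convergence of the prevalence estimates: if `P − P_n` is
invertible, then `E[‖q̂ − q̄‖₂²] ≤ ‖(P − P_n)⁻¹‖_op² (Σ_j Q_j(1−Q_j))/S`, and in
particular `E[‖q̂ − q̄‖₂²] ≤ ‖(P − P_n)⁻¹‖_op² (n−1)/(4S)`. -/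
theorem prevalence_estimates_mean_square_convergence
    (n m : ℕ) (hn : 2 ≤ n) (hm : 1 ≤ m)
    (Ω : Set (Fin m → ℝ)) (hΩ : MeasurableSet Ω)
    (P : Fin n → (Fin m → ℝ) → ℝ)
    (hPmeas : ∀ j, Measurable (P j))
    (hPnonneg : ∀ j r, 0 ≤ P j r)
    (hPsupp : ∀ j r, r ∉ Ω → P j r = 0)
    (hPone : ∀ j, ∫ r in Ω, P j r = 1)
    (q : Fin n → ℝ) (hq : ∀ j, 0 ≤ q j) (hqsum : ∑ j, q j = 1)
    (D : Fin n → Set (Fin m → ℝ))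
    (hDmeas : ∀ j, MeasurableSet (D j))
    (hDdisj : ∀ j k, j ≠ k → D j ∩ D k = ∅)
    (hDunion : ⋃ j, D j = Ω)
    (Qd : Fin n → ℝ)
    (hQd : ∀ j, Qd j = ∫ r in D j, (∑ k, q k * P k r))
    (Pmat : Fin n → Fin n → ℝ)
    (hPmat : ∀ j k, Pmat j k = ∫ r in D j, P k r)
    (e : Fin (n - 1) → Fin n) (he : ∀ i, (e i : ℕ) = (i : ℕ))
    (lastIdx : Fin n) (hlast : (lastIdx : ℕ) = n - 1)
    (A : Matrix (Fin (n - 1)) (Fin (n - 1)) ℝ)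
    (hA : ∀ i j, A i j = Pmat (e i) (e j) - Pmat (e i) lastIdx)
    (hAinv : IsUnit A)
    (Ω₀ : Type) [MeasurableSpace Ω₀] (μ : Measure Ω₀) [IsProbabilityMeasure μ]
    (S : ℕ) (hS : 0 < S)
    (R : Fin S → Ω₀ → (Fin m → ℝ))
    (hRmeas : ∀ i, Measurable (R i))
    (hRlaw : ∀ i, Measure.map (R i) μ =
      volume.withDensity (fun r => ENNReal.ofReal (∑ j, q j * P j r)))
    (hRindep : iIndepFun R μ)
    (Qhat : Fin n → Ω₀ → ℝ)
    (hQhat : ∀ j ω, Qhat j ω =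
      (∑ i, (D j).indicator (fun _ => (1 : ℝ)) (R i ω)) / S)
    (qhat : Ω₀ → Fin (n - 1) → ℝ)
    (hqhat : ∀ ω, qhat ω =
      A⁻¹.mulVec (fun i => Qhat (e i) ω - Pmat (e i) lastIdx)) :
    (∫ ω, (∑ k : Fin (n - 1), (qhat ω k - q (e k)) ^ 2) ∂μ ≤
        ‖Matrix.toEuclideanCLM (𝕜 := ℝ) A⁻¹‖ ^ 2 *
          ((∑ j : Fin (n - 1), Qd (e j) * (1 - Qd (e j))) / S)) ∧
      ∫ ω, (∑ k : Fin (n - 1), (qhat ω k - q (e k)) ^ 2) ∂μ ≤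
        ‖Matrix.toEuclideanCLM (𝕜 := ℝ) A⁻¹‖ ^ 2 * ((n - 1) / (4 * S)) :=
  prevalence_estimates_mean_square_convergence_general n m Ω P hPnonneg hPone q hq hqsum D hDmeas
    hDunion Qd hQd Pmat hPmat e he lastIdx hlast A hA hAinv Ω₀ μ S hS R hRmeas hRlaw hRindep Qhat
    hQhat qhat hqhat
end
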